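/- arXiv:0911.0412 — 8 statements merged into one kernel-verified Lean document; each statement's English description precedes it below -/
import Mathlib

section
/- The 4×4 matrix with rows (1,0,1,0), (1,0,0,1), (0,1,1,0), (0,1,0,1) has rank 3, but it does not admit a nonnegative dyadic decomposition of size 3; that is, its nonnegative rank equals 4 while its ordinary rank equals 3. -/
/-! A positive entry `P i j` needs a term `h` of a nonnegative decomposition with `c h i > 0` and
`r h j > 0`, and that term makes every entry `P i' j'` with `c h i' > 0`, `r h j' > 0` positive.
The positions `(0,0), (1,3), (2,2), (3,1)` form a fooling set: any two of them have a zero among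
their two crossed entries, so they need four distinct terms. The rank is `3` because the last
column is `c₀ + c₁ - c₂` while the block of rows and columns `0, 1, 2` is invertible. -/

def HasNNDecomp {I J : ℕ} (P : Matrix (Fin I) (Fin J) ℝ) (k : ℕ) : Prop :=
  ∃ (c : Fin k → Fin I → ℝ) (r : Fin k → Fin J → ℝ),
    (∀ h i, 0 ≤ c h i) ∧ (∀ h j, 0 ≤ r h j) ∧
    ∀ i j, P i j = ∑ h : Fin k, c h i * r h j

noncomputable def nnRank {I J : ℕ} (P : Matrix (Fin I) (Fin J) ℝ) : ℕ :=
  sInf {k | HasNNDecomp P k}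

theorem Matrix.rank_eq_of_mul_eq_of_mul_mul_eq_one {m o R : Type*} [Fintype m] [Fintype o]
    [CommRing R] [StrongRankCondition R] {n : ℕ} {P : Matrix m o R}
    {A : Matrix m (Fin n) R} {B : Matrix (Fin n) o R} {L : Matrix (Fin n) m R}
    {C : Matrix o (Fin n) R} (hAB : P = A * B) (hLC : L * P * C = 1) : P.rank = n := by
  refine le_antisymm ?_ ?_
  · calc P.rank ≤ A.rank := hAB ▸ A.rank_mul_le_left B
      _ ≤ n := A.rank_le_card_width.trans_eq (Fintype.card_fin n)
  · calc n = (1 : Matrix (Fin n) (Fin n) R).rank := by simp [Matrix.rank_one]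
      _ = (L * P * C).rank := by rw [hLC]
      _ ≤ (L * P).rank := (L * P).rank_mul_le_left C
      _ ≤ P.rank := L.rank_mul_le_right P

theorem hasNNDecomp_of_nonneg {I J : ℕ} {P : Matrix (Fin I) (Fin J) ℝ} (hP : ∀ i j, 0 ≤ P i j) :
    HasNNDecomp P I := by
  refine ⟨fun h i => (1 : Matrix (Fin I) (Fin I) ℝ) i h, P, fun h i => ?_, hP, fun i j => ?_⟩
  · dsimp only; rw [Matrix.one_apply]; positivity
  · rw [← Matrix.mul_apply, Matrix.one_mul]

theorem HasNNDecomp.card_le_of_fooling {I J k : ℕ} {P : Matrix (Fin I) (Fin J) ℝ}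
    {α : Type*} [Fintype α] {u : α → Fin I} {v : α → Fin J}
    (hdiag : ∀ a, P (u a) (v a) ≠ 0)
    (hcross : ∀ a b, a ≠ b → P (u a) (v b) = 0 ∨ P (u b) (v a) = 0)
    (hP : HasNNDecomp P k) : Fintype.card α ≤ k := by
  obtain ⟨c, r, hc, hr, hP⟩ := hP
  have entry_ne_zero : ∀ h i j, 0 < c h i → 0 < r h j → P i j ≠ 0 := fun h i j hci hrj => by
    rw [hP]
    exact (Finset.sum_pos' (fun h _ => mul_nonneg (hc h i) (hr h j))
      ⟨h, Finset.mem_univ h, mul_pos hci hrj⟩).ne'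
  have witness : ∀ a, ∃ h, 0 < c h (u a) ∧ 0 < r h (v a) := fun a => by
    obtain ⟨h, -, hne⟩ := Finset.exists_ne_zero_of_sum_ne_zero (hP _ _ ▸ hdiag a)
    exact ⟨h, (hc h _).lt_of_ne' (left_ne_zero_of_mul hne),
      (hr h _).lt_of_ne' (right_ne_zero_of_mul hne)⟩
  choose g hg using witness
  have hg_inj : Function.Injective g := fun a b hab => by
    by_contra hne
    rcases hcross a b hne with hab' | hba'
    · exact entry_ne_zero (g a) _ _ (hg a).1 (hab ▸ (hg b).2) hab'
    · exact entry_ne_zero (g a) _ _ (hab ▸ (hg b).1) (hg a).2 hba'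
  simpa using Fintype.card_le_of_injective g hg_inj

/-- the displayed 4×4 matrix has ordinary rank 3 but admits no nonnegative
dyadic decomposition of size 3; its nonnegative rank is 4. -/
theorem rank_ne_nnRank_example :
    (!![(1:ℝ),0,1,0; 1,0,0,1; 0,1,1,0; 0,1,0,1]).rank = 3 ∧
    ¬ HasNNDecomp !![(1:ℝ),0,1,0; 1,0,0,1; 0,1,1,0; 0,1,0,1] 3 ∧
    nnRank !![(1:ℝ),0,1,0; 1,0,0,1; 0,1,1,0; 0,1,0,1] = 4 := by
  set P : Matrix (Fin 4) (Fin 4) ℝ := !![1,0,1,0; 1,0,0,1; 0,1,1,0; 0,1,0,1] with hP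
  have hrank : P.rank = 3 := by
    refine Matrix.rank_eq_of_mul_eq_of_mul_mul_eq_one
      (A := !![1,0,1; 1,0,0; 0,1,1; 0,1,0]) (B := !![1,0,0,1; 0,1,0,1; 0,0,1,-1])
      (L := !![0,1,0,0; 0,0,0,1; 1,-1,0,0]) (C := !![1,0,0; 0,1,0; 0,0,1; 0,0,0]) ?_ ?_ <;>
    · ext i j
      fin_cases i <;> fin_cases j <;> simp [hP, Matrix.mul_apply, Fin.sum_univ_succ]
  have four_le : ∀ k, HasNNDecomp P k → 4 ≤ k := fun k hk => by
    simpa using hk.card_le_of_fooling (u := id) (v := ![0, 3, 2, 1])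
      (by intro a; fin_cases a <;> simp [hP])
      (by intro a b hab; fin_cases a <;> fin_cases b <;> simp [hP] at hab ⊢)
  have hdecomp : HasNNDecomp P 4 :=
    hasNNDecomp_of_nonneg fun i j => by fin_cases i <;> fin_cases j <;> simp [hP]
  exact ⟨hrank, fun h3 => absurd (four_le 3 h3) (by norm_num),
    IsLeast.csInf_eq ⟨hdecomp, four_le⟩⟩
end

section
/- Let P be a nonnegative real I×J matrix with (ordinary) rank at most 2. Then P admits a nonnegative dyadic decomposition of size equal to its rank; in particular, if rank(P) = 2 then there exist nonnegative vectors c_1, c_2 ∈ R_+^I and r_1, r_2 ∈ R_+^J with P = c_1 r_1^t + c_2 r_2^t. Consequently rk_+(P) = rank(P). -/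
/-! Divide every nonzero column of `P` by its entry sum. The rescaled columns lie in the
column space intersected with the affine hyperplane `∑ i, v i = 1`, an affine subspace of
dimension `rank P - 1`. For rank one they all coincide; for rank two they lie on a line, hence
in the segment between the two extreme ones, so every column is a nonnegative combination of
those two columns of `P`. Conversely, a nonnegative decomposition of size `k` exhibits the
column space inside the span of `k` vectors, so `rank P ≤ rk₊ P`. -/

open Module Set Submodule

section LevelSet

variable {K V : Type*} [Field K] [AddCommGroup V] [Module K V]

theorem finrank_vectorSpan_lt_of_subset_of_eq_const {W : Submodule K V} [FiniteDimensional K W]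
    {s : Set V} (hsW : s ⊆ W) (hs : s.Nonempty) (f : V →ₗ[K] K) {c : K} (hc : c ≠ 0)
    (hf : ∀ v ∈ s, f v = c) : finrank K (vectorSpan K s) < finrank K W := by
  obtain ⟨v, hv⟩ := hs
  have hspan : vectorSpan K s ≤ W ⊓ LinearMap.ker f := by
    rw [vectorSpan_def, span_le]
    rintro _ ⟨a, ha, b, hb, rfl⟩
    exact ⟨sub_mem (hsW ha) (hsW hb), by simp [hf a ha, hf b hb]⟩
  have hlt : W ⊓ LinearMap.ker f < W :=
    inf_le_left.lt_of_ne fun h => hc <| (hf v hv).symm.trans <| by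
      simpa using (h.symm ▸ hsW hv : v ∈ W ⊓ LinearMap.ker f).2
  exact (finrank_mono hspan).trans_lt (finrank_lt_finrank_of_lt hlt)

def normalizeBy (σ : V →ₗ[K] K) (v : V) : V := (σ v)⁻¹ • v

variable (σ : V →ₗ[K] K) {v : V}

theorem map_normalizeBy (h : σ v ≠ 0) : σ (normalizeBy σ v) = 1 := by
  simp [normalizeBy, h]

theorem smul_normalizeBy (h : σ v ≠ 0) : σ v • normalizeBy σ v = v := by
  simp [normalizeBy, h]

theorem finrank_vectorSpan_normalizeBy_lt {ι : Type*} [Finite ι] {x : ι → V} {j₀ : ι}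
    (h₀ : σ (x j₀) ≠ 0) :
    finrank K (vectorSpan K (normalizeBy σ ∘ x '' {j | σ (x j) ≠ 0})) <
      finrank K (span K (range x)) := by
  have := FiniteDimensional.span_of_finite K (finite_range x)
  refine finrank_vectorSpan_lt_of_subset_of_eq_const ?_ ⟨_, j₀, h₀, rfl⟩ σ one_ne_zero ?_
  · rintro _ ⟨j, -, rfl⟩
    exact smul_mem _ _ (subset_span ⟨j, rfl⟩)
  · rintro _ ⟨j, hj, rfl⟩
    exact map_normalizeBy σ hj

end LevelSet

section OrderedField

variable {K V : Type*} [Field K] [LinearOrder K] [IsStrictOrderedRing K]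
  [AddCommGroup V] [Module K V]

theorem AffineMap.apply_mem_segment_of_mem_Icc (f : K →ᵃ[K] V) {a b t : K} (ht : t ∈ Icc a b) :
    f t ∈ segment K (f a) (f b) := by
  rw [← image_segment, segment_eq_Icc (ht.1.trans ht.2)]
  exact mem_image_of_mem f ht

variable (σ : V →ₗ[K] K)

theorem exists_nonneg_smul_add_smul_eq_of_normalizeBy_mem_segment {u v w : V}
    (hu : 0 < σ u) (hv : 0 < σ v) (hw : 0 < σ w)
    (h : normalizeBy σ v ∈ segment K (normalizeBy σ u) (normalizeBy σ w)) :
    ∃ a b : K, 0 ≤ a ∧ 0 ≤ b ∧ v = a • u + b • w := by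
  obtain ⟨a, b, ha, hb, -, hab⟩ := h
  refine ⟨σ v * a * (σ u)⁻¹, σ v * b * (σ w)⁻¹, by positivity, by positivity, ?_⟩
  calc v = σ v • normalizeBy σ v := (smul_normalizeBy σ hv.ne').symm
    _ = _ := by rw [← hab]; simp only [normalizeBy, smul_add, smul_smul, mul_assoc]

variable {ι : Type*} [Finite ι] {x : ι → V}

theorem exists_nonneg_smul_eq_of_finrank_span_le_one (hx : ∀ j, x j ≠ 0 → 0 < σ (x j))
    {j₀ : ι} (h₀ : x j₀ ≠ 0) (hrk : finrank K (span K (range x)) ≤ 1) (j : ι) :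
    ∃ a : K, 0 ≤ a ∧ x j = a • x j₀ := by
  have hσ₀ := hx j₀ h₀
  rcases eq_or_ne (x j) 0 with hj | hj
  · exact ⟨0, le_rfl, by simp [hj]⟩
  have hσ := hx j hj
  have hbot : vectorSpan K (normalizeBy σ ∘ x '' {j | σ (x j) ≠ 0}) = ⊥ :=
    finrank_eq_zero.mp (by have := finrank_vectorSpan_normalizeBy_lt σ hσ₀.ne'; omega)
  have heq : normalizeBy σ (x j) = normalizeBy σ (x j₀) :=
    (vectorSpan_eq_bot_iff_subsingleton K).mp hbot ⟨j, hσ.ne', rfl⟩ ⟨j₀, hσ₀.ne', rfl⟩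
  refine ⟨σ (x j) * (σ (x j₀))⁻¹, by positivity, ?_⟩
  calc x j = σ (x j) • normalizeBy σ (x j₀) := by rw [← heq, smul_normalizeBy σ hσ.ne']
    _ = _ := smul_smul _ _ _

theorem exists_nonneg_smul_add_smul_eq_of_finrank_span_le_two
    (hx : ∀ j, x j ≠ 0 → 0 < σ (x j)) {j₀ : ι} (h₀ : x j₀ ≠ 0)
    (hrk : finrank K (span K (range x)) ≤ 2) :
    ∃ m M, ∀ j, ∃ a b : K, 0 ≤ a ∧ 0 ≤ b ∧ x j = a • x m + b • x M := by
  have hlt := finrank_vectorSpan_normalizeBy_lt σ (hx j₀ h₀).ne'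
  set S := {j | σ (x j) ≠ 0}
  set n := normalizeBy σ ∘ x
  have hj₀ : j₀ ∈ S := (hx j₀ h₀).ne'
  have hS_pos : ∀ j ∈ S, 0 < σ (x j) := fun j hj => hx j fun h => hj (by simp [h])
  have : FiniteDimensional K (vectorSpan K (n '' S)) :=
    finiteDimensional_vectorSpan_of_finite K ((toFinite S).image n)
  obtain ⟨q, hq⟩ := (collinear_iff_of_mem (mem_image_of_mem n hj₀)).mp <|
    (collinear_iff_finrank_le_one (k := K)).mpr (by omega)
  have : ∀ j, ∃ r : K, j ∈ S → n j = r • q +ᵥ n j₀ := fun j =>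
    if hj : j ∈ S then (hq _ (mem_image_of_mem n hj)).imp fun _ h _ => h
    else ⟨0, fun h => absurd h hj⟩
  -- `t j` is the coordinate of `n j` on the line through `n j₀` with direction `q`.
  choose t ht using this
  obtain ⟨m, hmS, hm⟩ := S.exists_min_image t (toFinite S) ⟨j₀, hj₀⟩
  obtain ⟨M, hMS, hM⟩ := S.exists_max_image t (toFinite S) ⟨j₀, hj₀⟩
  set f : K →ᵃ[K] V := AffineMap.lineMap (n j₀) (q +ᵥ n j₀)
  have hf : ∀ r, f r = r • q +ᵥ n j₀ := by simp [f, AffineMap.lineMap_apply]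
  refine ⟨m, M, fun j => ?_⟩
  by_cases hj : j ∈ S
  · refine exists_nonneg_smul_add_smul_eq_of_normalizeBy_mem_segment σ (hS_pos m hmS)
      (hS_pos j hj) (hS_pos M hMS) ?_
    change n j ∈ segment K (n m) (n M)
    rw [ht j hj, ht m hmS, ht M hMS, ← hf, ← hf, ← hf]
    exact f.apply_mem_segment_of_mem_Icc ⟨hm j hj, hM j hj⟩
  · have hxj : x j = 0 := by_contra fun h => hj (hx j h).ne'
    exact ⟨0, 0, le_rfl, le_rfl, by simp [hxj]⟩

end OrderedField

theorem Matrix.rank_eq_zero_iff {m n K : Type*} [Fintype n] [Field K] {A : Matrix m n K} :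
    A.rank = 0 ↔ A = 0 := by
  have := FiniteDimensional.span_of_finite K (finite_range A.col)
  rw [rank_eq_finrank_span_cols, Submodule.finrank_eq_zero, span_eq_bot, forall_mem_range]
  exact ⟨fun h => Matrix.ext fun i j => congrFun (h j) i, fun h j => by subst h; rfl⟩

section NonnegativeDecomposition

variable {I J : ℕ} {P : Matrix (Fin I) (Fin J) ℝ}

theorem HasNNDecomp.rank_le {k : ℕ} (h : HasNNDecomp P k) : P.rank ≤ k := by
  obtain ⟨c, r, -, -, hP⟩ := h
  have hcols : span ℝ (range P.col) ≤ span ℝ (range c) := by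
    rw [span_le]
    rintro _ ⟨j, rfl⟩
    have : P.col j = ∑ h, r h j • c h := by
      funext i
      simpa [mul_comm] using hP i j
    exact this ▸ sum_mem fun h _ => smul_mem _ _ (subset_span ⟨h, rfl⟩)
  rw [P.rank_eq_finrank_span_cols]
  exact (finrank_mono hcols).trans ((finrank_range_le_card c).trans_eq (Fintype.card_fin k))

theorem nnRank_eq_rank_of_hasNNDecomp (h : HasNNDecomp P P.rank) : nnRank P = P.rank :=
  (Nat.sInf_le h).antisymm (le_csInf ⟨_, h⟩ fun _ hk => hk.rank_le)

theorem hasNNDecomp_of_col_eq_sum (hP : ∀ i j, 0 ≤ P i j) {k : ℕ} (col : Fin k → Fin J)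
    (w : Fin k → Fin J → ℝ) (hw : ∀ h j, 0 ≤ w h j)
    (hcol : ∀ j, P.col j = ∑ h, w h j • P.col (col h)) : HasNNDecomp P k :=
  ⟨fun h => P.col (col h), w, fun h i => hP i (col h), hw, fun i j => by
    simpa [mul_comm] using congrFun (hcol j) i⟩

theorem hasNNDecomp_rank_of_rank_le_two (hP : ∀ i j, 0 ≤ P i j) (hrk : P.rank ≤ 2) :
    HasNNDecomp P P.rank := by
  rcases Nat.eq_zero_or_pos P.rank with h0 | hpos
  · rw [h0]
    exact hasNNDecomp_of_col_eq_sum hP finZeroElim finZeroElim (fun h => h.elim0)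
      fun j => by simp [Matrix.rank_eq_zero_iff.mp h0, Matrix.col_def]; rfl
  obtain ⟨j₀, h₀⟩ : ∃ j, P.col j ≠ 0 := by
    by_contra! hcol
    exact hpos.ne' (Matrix.rank_eq_zero_iff.mpr (Matrix.ext fun i j => congrFun (hcol j) i))
  let σ : (Fin I → ℝ) →ₗ[ℝ] ℝ := ∑ i, LinearMap.proj i
  have hσ : ∀ j, P.col j ≠ 0 → 0 < σ (P.col j) := fun j hj => by
    simpa [σ] using Fintype.sum_pos (lt_of_le_of_ne (fun i => hP i j) hj.symm)
  have hcols := P.rank_eq_finrank_span_cols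
  rcases (by omega : P.rank = 1 ∨ P.rank = 2) with h | h
  · choose a ha hcol using exists_nonneg_smul_eq_of_finrank_span_le_one σ hσ h₀ (hcols ▸ h.le)
    rw [h]
    exact hasNNDecomp_of_col_eq_sum hP ![j₀] ![a] (by simpa using ha) (by simpa using hcol)
  · obtain ⟨m, M, hmM⟩ :=
      exists_nonneg_smul_add_smul_eq_of_finrank_span_le_two σ hσ h₀ (hcols ▸ hrk)
    choose a b ha hb hcol using hmM
    rw [h]
    exact hasNNDecomp_of_col_eq_sum hP ![m, M] ![a, b] (by simp [Fin.forall_fin_two, ha, hb])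
      (by simpa [Fin.sum_univ_two] using hcol)

end NonnegativeDecomposition

/-- a nonnegative matrix of rank at most 2 admits a nonnegative dyadic
decomposition of size equal to its rank; in particular if rank P = 2 then
P = c₁r₁ᵗ + c₂r₂ᵗ with nonnegative vectors, and rk₊(P) = rank(P). -/
theorem nnRank_eq_rank_of_rank_le_two {I J : ℕ} (P : Matrix (Fin I) (Fin J) ℝ)
    (hP : ∀ i j, 0 ≤ P i j) (hrk : P.rank ≤ 2) :
    HasNNDecomp P P.rank ∧
    (P.rank = 2 → ∃ (c₁ c₂ : Fin I → ℝ) (r₁ r₂ : Fin J → ℝ),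
      (∀ i, 0 ≤ c₁ i) ∧ (∀ i, 0 ≤ c₂ i) ∧ (∀ j, 0 ≤ r₁ j) ∧ (∀ j, 0 ≤ r₂ j) ∧
      ∀ i j, P i j = c₁ i * r₁ j + c₂ i * r₂ j) ∧
    nnRank P = P.rank := by
  have hdec := hasNNDecomp_rank_of_rank_le_two hP hrk
  refine ⟨hdec, fun h2 => ?_, nnRank_eq_rank_of_hasNNDecomp hdec⟩
  obtain ⟨c, r, hc, hr, hP⟩ := h2 ▸ hdec
  exact ⟨c 0, c 1, r 0, r 1, hc 0, hc 1, hr 0, hr 1, fun i j => by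
    simpa [Fin.sum_univ_two] using hP i j⟩
end

section
/- Let P be an I×J probability matrix (nonnegative entries summing to 1) with rank exactly 2. Then there exist two indices j̄ and j̃ such that, denoting by C̄ and C̃ the corresponding columns of P, every column C_i of P can be written as C_i = t_i C̄ + s_i C̃ with nonnegative real coefficients t_i ≥ 0 and s_i ≥ 0. -/
/-!
Nonzero nonnegative columns have positive coordinate sum; rescaled to sum `1` they lie in the
intersection of the rank-two column space with the hyperplane `sum = 1`, which is a line. A finite
set on a line lies in the segment between its extreme points, so every column is a nonnegative
combination of the two extreme columns, and these differ because the rank is two.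
-/

open Module Submodule Set

section

variable {𝕜 E : Type*} [Field 𝕜] [LinearOrder 𝕜] [IsStrictOrderedRing 𝕜]
  [AddCommGroup E] [Module 𝕜 E]

theorem collinear_of_subset_of_map_eq_one {W : Submodule 𝕜 E} [FiniteDimensional 𝕜 W]
    (hW : finrank 𝕜 W ≤ 2) (φ : E →ₗ[𝕜] 𝕜) {S : Set E} (hSW : S ⊆ W)
    (hS : ∀ x ∈ S, φ x = 1) : Collinear 𝕜 S := by
  rcases S.eq_empty_or_nonempty with rfl | ⟨x, hx⟩
  · exact collinear_empty 𝕜 E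
  have hspan : vectorSpan 𝕜 S ≤ W ⊓ LinearMap.ker φ := by
    rw [vectorSpan_def, Submodule.span_le]
    rintro _ ⟨y, hy, z, hz, rfl⟩
    exact ⟨W.sub_mem (hSW hy) (hSW hz), by simp [hS y hy, hS z hz]⟩
  have hlt : W ⊓ LinearMap.ker φ < W :=
    SetLike.lt_iff_le_and_exists.2
      ⟨inf_le_left, x, hSW hx, fun hx' => by simpa [hS x hx] using hx'.2⟩
  have : FiniteDimensional 𝕜 (vectorSpan 𝕜 S) :=
    Submodule.finiteDimensional_of_le (hspan.trans hlt.le)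
  rw [collinear_iff_finrank_le_one]
  have := Submodule.finrank_lt_finrank_of_lt hlt
  have := Submodule.finrank_mono hspan
  omega

theorem Collinear.exists_forall_mem_segment {ι : Type*} [Finite ι] [Nonempty ι] {u : ι → E}
    (h : Collinear 𝕜 (range u)) : ∃ a b, ∀ i, u i ∈ segment 𝕜 (u a) (u b) := by
  obtain ⟨i₀⟩ := ‹Nonempty ι›
  obtain ⟨d, hd⟩ := (collinear_iff_of_mem (mem_range_self i₀)).1 h
  choose r hr using fun i => hd (u i) (mem_range_self i)
  obtain ⟨a, ha⟩ := Finite.exists_min r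
  obtain ⟨b, hb⟩ := Finite.exists_max r
  let g : 𝕜 →ᵃ[𝕜] E := AffineMap.lineMap (u i₀) (d + u i₀)
  have hg : ∀ i, g (r i) = u i := fun i => by
    simp [g, AffineMap.lineMap_apply, hr i]
  refine ⟨a, b, fun i => ?_⟩
  rw [← hg a, ← hg b, ← hg i, ← image_segment]
  refine mem_image_of_mem g ?_
  rw [segment_eq_Icc (ha b)]
  exact ⟨ha i, hb i⟩

theorem exists_nonneg_comb_of_inv_smul_mem_segment {x y z : E} {a b c : 𝕜} (ha : 0 < a)
    (hb : 0 < b) (hc : 0 < c) (h : c⁻¹ • z ∈ segment 𝕜 (a⁻¹ • x) (b⁻¹ • y)) :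
    ∃ t s : 𝕜, 0 ≤ t ∧ 0 ≤ s ∧ z = t • x + s • y := by
  obtain ⟨l, m, hl, hm, -, hlm⟩ := h
  refine ⟨c * l * a⁻¹, c * m * b⁻¹, by positivity, by positivity, ?_⟩
  calc z = c • c⁻¹ • z := (smul_inv_smul₀ hc.ne' z).symm
    _ = _ := by simp only [← hlm, smul_add, smul_smul, mul_assoc]

theorem exists_pair_nonneg_comb_of_finrank_span_eq_two {ι : Type*} [Finite ι] {v : ι → E}
    (φ : E →ₗ[𝕜] 𝕜) (hφ : ∀ i, v i ≠ 0 → 0 < φ (v i))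
    (hrank : finrank 𝕜 (span 𝕜 (range v)) = 2) :
    ∃ a b, a ≠ b ∧ ∀ j, ∃ t s : 𝕜, 0 ≤ t ∧ 0 ≤ s ∧ v j = t • v a + s • v b := by
  have : FiniteDimensional 𝕜 (span 𝕜 (range v)) :=
    FiniteDimensional.span_of_finite 𝕜 (finite_range v)
  let u : {i // v i ≠ 0} → E := fun i => (φ (v i))⁻¹ • v i
  have hu : ∀ i : {i // v i ≠ 0}, v i = φ (v i) • u i := fun i =>
    (smul_inv_smul₀ (hφ i i.2).ne' _).symm
  have hφu : ∀ i, φ (u i) = 1 := fun i => by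
    rw [map_smul, smul_eq_mul, inv_mul_cancel₀ (hφ i i.2).ne']
  have : Nonempty {i // v i ≠ 0} := by
    by_contra! h
    have : span 𝕜 (range v) = ⊥ :=
      span_eq_bot.2 <| forall_mem_range.2 fun i => by_contra fun hi => h.elim ⟨i, hi⟩
    rw [this, finrank_bot] at hrank
    exact absurd hrank (by norm_num)
  have hcol : Collinear 𝕜 (range u) := by
    refine collinear_of_subset_of_map_eq_one hrank.le φ ?_ ?_
    · rintro _ ⟨i, rfl⟩
      exact smul_mem _ _ (subset_span (mem_range_self i.1))
    · rintro _ ⟨i, rfl⟩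
      exact hφu i
  obtain ⟨a, b, hab⟩ := hcol.exists_forall_mem_segment
  refine ⟨a, b, fun h => ?_, fun j => ?_⟩
  · obtain rfl : a = b := Subtype.ext h
    have hle : span 𝕜 (range v) ≤ 𝕜 ∙ u a := by
      rw [span_le]
      rintro _ ⟨i, rfl⟩
      by_cases hi : v i = 0
      · simp [hi]
      have hua : u ⟨i, hi⟩ = u a := by simpa using hab ⟨i, hi⟩
      rw [SetLike.mem_coe, hu ⟨i, hi⟩, hua]
      exact smul_mem _ _ (mem_span_singleton_self _)
    have hua : u a ≠ 0 := fun h0 => by simpa [h0] using hφu a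
    have := Submodule.finrank_mono hle
    rw [hrank, finrank_span_singleton hua] at this
    omega
  by_cases hj : v j = 0
  · exact ⟨0, 0, le_rfl, le_rfl, by simp [hj]⟩
  exact exists_nonneg_comb_of_inv_smul_mem_segment (hφ a a.2) (hφ b b.2) (hφ j hj) (hab ⟨j, hj⟩)

end

theorem exists_two_columns_nonneg_comb_general {I J : ℕ} (P : Matrix (Fin I) (Fin J) ℝ)
    (hpos : ∀ i j, 0 ≤ P i j)
    (hrk : P.rank = 2) :
    ∃ jbar jtilde : Fin J, jbar ≠ jtilde ∧
      ∀ j : Fin J, ∃ t s : ℝ, 0 ≤ t ∧ 0 ≤ s ∧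
        ∀ i, P i j = t * P i jbar + s * P i jtilde := by
  let colSum : (Fin I → ℝ) →ₗ[ℝ] ℝ := ∑ i, LinearMap.proj i
  have hcolSum : ∀ j, P.col j ≠ 0 → 0 < colSum (P.col j) := fun j hj => by
    have hnn : ∀ i ∈ Finset.univ, 0 ≤ P i j := fun i _ => hpos i j
    have hsum : colSum (P.col j) = ∑ i, P i j := by simp [colSum]
    rw [hsum]
    refine (Finset.sum_nonneg hnn).lt_of_ne' fun h0 => hj (funext fun i => ?_)
    exact (Finset.sum_eq_zero_iff_of_nonneg hnn).1 h0 i (Finset.mem_univ i)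
  obtain ⟨a, b, hab, hcomb⟩ := exists_pair_nonneg_comb_of_finrank_span_eq_two colSum hcolSum
    (P.rank_eq_finrank_span_cols ▸ hrk)
  refine ⟨a, b, hab, fun j => ?_⟩
  obtain ⟨t, s, ht, hs, hj⟩ := hcomb j
  exact ⟨t, s, ht, hs, fun i => congrFun hj i⟩

/-- for a probability matrix of rank exactly 2, there exist two columns
such that every column is a nonnegative linear combination of them. -/
theorem exists_two_columns_nonneg_comb {I J : ℕ} (P : Matrix (Fin I) (Fin J) ℝ)
    (hpos : ∀ i j, 0 ≤ P i j) (hsum : ∑ i, ∑ j, P i j = 1)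
    (hrk : P.rank = 2) :
    ∃ jbar jtilde : Fin J, jbar ≠ jtilde ∧
      ∀ j : Fin J, ∃ t s : ℝ, 0 ≤ t ∧ 0 ≤ s ∧
        ∀ i, P i j = t * P i jbar + s * P i jtilde :=
  exists_two_columns_nonneg_comb_general P hpos hrk
end

section
/- Let P be an I×J probability matrix (nonnegative entries summing to 1) with rank at most 2. Then there exist α ∈ [0,1], probability (column) vectors c_1, c_2 ∈ R_+^I (nonnegative entries summing to 1) and probability vectors r_1, r_2 ∈ R_+^J (nonnegative entries summing to 1) such that P = α c_1 r_1^t + (1−α) c_2 r_2^t; that is, P is a mixture of two independence models. -/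
/-!
After dividing each column of `P` by its sum, the columns become probability vectors in the
column space `C` of `P`. The coordinate sum is a linear functional that does not vanish on `C`,
so its level set `{v ∈ C | ∑ v = 1}` is an affine space of dimension `dim C - 1 ≤ 1`: all
normalized columns lie on one line, hence in the segment between the two extreme ones, `c₁` and
`c₂`. Thus every column of `P` is a nonnegative combination of `c₁` and `c₂`; collecting the
coefficients into two weight vectors and normalizing them gives `α`, `r₁` and `r₂`.
-/

open Module Finset

section Segment

variable {𝕜 E : Type*} [Field 𝕜] [AddCommGroup E] [Module 𝕜 E]

theorem Submodule.exists_lineMap_of_finrank_le_two {C : Submodule 𝕜 E} [FiniteDimensional 𝕜 C]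
    (hC : finrank 𝕜 C ≤ 2) (φ : E →ₗ[𝕜] 𝕜) {x : E} (hx : x ∈ C) (hφx : φ x ≠ 0) :
    ∃ f : 𝕜 →ᵃ[𝕜] E, ∀ y ∈ C, φ y = φ x → y ∈ Set.range f := by
  have hlt : C ⊓ LinearMap.ker φ < C :=
    inf_le_left.lt_of_ne fun h => hφx (h.ge hx).2
  have hW : finrank 𝕜 ↥(C ⊓ LinearMap.ker φ) ≤ 1 := by
    have := Submodule.finrank_lt_finrank_of_lt hlt
    omega
  obtain ⟨w, hw⟩ := ((Submodule.finrank_le_one_iff_isPrincipal _).mp hW).principal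
  refine ⟨AffineMap.lineMap x (x + w), fun y hy hφy => ?_⟩
  have hyx : y - x ∈ C ⊓ LinearMap.ker φ :=
    ⟨C.sub_mem hy hx, by simp [LinearMap.mem_ker, hφy]⟩
  rw [hw, Submodule.mem_span_singleton] at hyx
  obtain ⟨t, ht⟩ := hyx
  exact ⟨t, by rw [AffineMap.lineMap_apply_module', add_sub_cancel_left, ht, sub_add_cancel]⟩

variable [LinearOrder 𝕜] [IsStrictOrderedRing 𝕜]

theorem AffineMap.exists_forall_mem_segment {J : Type*} [Finite J] [Nonempty J]
    (f : 𝕜 →ᵃ[𝕜] E) (μ : J → 𝕜) :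
    ∃ m M, ∀ j, f (μ j) ∈ segment 𝕜 (f (μ m)) (f (μ M)) := by
  obtain ⟨m, hm⟩ := Finite.exists_min μ
  obtain ⟨M, hM⟩ := Finite.exists_max μ
  refine ⟨m, M, fun j => ?_⟩
  rw [← image_segment]
  exact Set.mem_image_of_mem f (Icc_subset_segment ⟨hm j, hM j⟩)

theorem Submodule.exists_forall_mem_segment_of_finrank_le_two {J : Type*} [Finite J]
    [Nonempty J] {C : Submodule 𝕜 E} [FiniteDimensional 𝕜 C] (hC : finrank 𝕜 C ≤ 2)
    (φ : E →ₗ[𝕜] 𝕜) (q : J → E) (hqC : ∀ j, q j ∈ C) (hφq : ∀ j, φ (q j) = 1) :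
    ∃ m M, ∀ j, q j ∈ segment 𝕜 (q m) (q M) := by
  obtain ⟨j₀⟩ := ‹Nonempty J›
  obtain ⟨f, hf⟩ := C.exists_lineMap_of_finrank_le_two hC φ (hqC j₀) (by simp [hφq])
  choose μ hμ using fun j => hf (q j) (hqC j) (by rw [hφq, hφq])
  obtain ⟨m, M, h⟩ := f.exists_forall_mem_segment μ
  exact ⟨m, M, fun j => by simpa only [hμ] using h j⟩

end Segment

section Normalize

variable {𝕜 ι : Type*} [Field 𝕜] [Fintype ι]

open scoped Classical in
noncomputable def normalizeOr (r₀ v : ι → 𝕜) : ι → 𝕜 :=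
  if ∑ i, v i = 0 then r₀ else (∑ i, v i)⁻¹ • v

theorem normalizeOr_mem {C : Submodule 𝕜 (ι → 𝕜)} {r₀ v : ι → 𝕜} (hr₀ : r₀ ∈ C) (hv : v ∈ C) :
    normalizeOr r₀ v ∈ C := by
  unfold normalizeOr
  split_ifs
  exacts [hr₀, C.smul_mem _ hv]

variable [LinearOrder 𝕜] [IsStrictOrderedRing 𝕜]

theorem normalizeOr_mem_stdSimplex {r₀ v : ι → 𝕜} (hr₀ : r₀ ∈ stdSimplex 𝕜 ι)
    (hv : ∀ i, 0 ≤ v i) : normalizeOr r₀ v ∈ stdSimplex 𝕜 ι := by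
  unfold normalizeOr
  split_ifs with h
  · exact hr₀
  · refine ⟨fun i => mul_nonneg (inv_nonneg.mpr (sum_nonneg fun j _ => hv j)) (hv i), ?_⟩
    simp only [Pi.smul_apply, smul_eq_mul, ← mul_sum, inv_mul_cancel₀ h]

theorem sum_smul_normalizeOr (r₀ : ι → 𝕜) {v : ι → 𝕜} (hv : ∀ i, 0 ≤ v i) :
    (∑ i, v i) • normalizeOr r₀ v = v := by
  unfold normalizeOr
  split_ifs with h
  · have hv0 : v = 0 := funext fun i => (sum_eq_zero_iff_of_nonneg fun j _ => hv j).mp h i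
      (mem_univ i)
    simp [hv0]
  · exact smul_inv_smul₀ h v

theorem exists_mixture_of_sum_add_sum_eq_one {A B : ι → 𝕜} (hA : ∀ j, 0 ≤ A j)
    (hB : ∀ j, 0 ≤ B j) (hAB : ∑ j, A j + ∑ j, B j = 1) :
    ∃ α : 𝕜, 0 ≤ α ∧ α ≤ 1 ∧ ∃ r₁ ∈ stdSimplex 𝕜 ι, ∃ r₂ ∈ stdSimplex 𝕜 ι,
      A = α • r₁ ∧ B = (1 - α) • r₂ := by
  have hr₀ : A + B ∈ stdSimplex 𝕜 ι :=
    ⟨fun j => add_nonneg (hA j) (hB j), by simp [sum_add_distrib, hAB]⟩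
  have hB0 : 0 ≤ ∑ j, B j := sum_nonneg fun j _ => hB j
  refine ⟨∑ j, A j, sum_nonneg fun j _ => hA j, by linarith,
    _, normalizeOr_mem_stdSimplex hr₀ hA, _, normalizeOr_mem_stdSimplex hr₀ hB,
    (sum_smul_normalizeOr _ hA).symm, ?_⟩
  rw [← hAB, add_sub_cancel_left]
  exact (sum_smul_normalizeOr _ hB).symm

end Normalize

namespace Matrix

variable {𝕜 ι κ : Type*} [Field 𝕜] [LinearOrder 𝕜] [IsStrictOrderedRing 𝕜] [Fintype ι]
  [Fintype κ]

theorem exists_col_eq_smul_mem_stdSimplex (P : Matrix ι κ 𝕜) (hpos : ∀ i j, 0 ≤ P i j)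
    (hsum : ∑ i, ∑ j, P i j = 1) :
    ∃ q : κ → ι → 𝕜, (∀ j, q j ∈ stdSimplex 𝕜 ι) ∧
      (∀ j, q j ∈ Submodule.span 𝕜 (Set.range P.col)) ∧ ∀ j, P.col j = (∑ i, P i j) • q j := by
  set r₀ : ι → 𝕜 := fun i => ∑ j, P i j
  have hr₀S : r₀ ∈ stdSimplex 𝕜 ι := ⟨fun i => sum_nonneg fun j _ => hpos i j, hsum⟩
  have hr₀C : r₀ ∈ Submodule.span 𝕜 (Set.range P.col) := by
    have hr₀_eq : r₀ = ∑ j, P.col j := by ext i; simp [r₀, Finset.sum_apply, col_apply]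
    rw [hr₀_eq]
    exact Submodule.sum_mem _ fun j _ => Submodule.subset_span ⟨j, rfl⟩
  exact ⟨fun j => normalizeOr r₀ (P.col j),
    fun j => normalizeOr_mem_stdSimplex hr₀S fun i => hpos i j,
    fun j => normalizeOr_mem hr₀C (Submodule.subset_span ⟨j, rfl⟩),
    fun j => (sum_smul_normalizeOr r₀ fun i => hpos i j).symm⟩

theorem exists_eq_mul_add_mul_of_rank_le_two (P : Matrix ι κ 𝕜) (hpos : ∀ i j, 0 ≤ P i j)
    (hsum : ∑ i, ∑ j, P i j = 1) (hrk : P.rank ≤ 2) :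
    ∃ c₁ ∈ stdSimplex 𝕜 ι, ∃ c₂ ∈ stdSimplex 𝕜 ι, ∃ A B : κ → 𝕜,
      (∀ j, 0 ≤ A j) ∧ (∀ j, 0 ≤ B j) ∧ ∑ j, A j + ∑ j, B j = 1 ∧
      ∀ i j, P i j = A j * c₁ i + B j * c₂ i := by
  obtain ⟨q, hqS, hqC, hPq⟩ := P.exists_col_eq_smul_mem_stdSimplex hpos hsum
  have : Nonempty κ := by
    by_contra h
    simp [not_nonempty_iff.mp h] at hsum
  obtain ⟨m, M, hseg⟩ := Submodule.exists_forall_mem_segment_of_finrank_le_two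
    (P.rank_eq_finrank_span_cols ▸ hrk) (∑ i, LinearMap.proj i) q hqC
    fun j => by simpa using (hqS j).2
  choose a b ha hb hab hq using hseg
  have hs : ∀ j, 0 ≤ ∑ i, P i j := fun j => sum_nonneg fun i _ => hpos i j
  refine ⟨q m, hqS m, q M, hqS M, fun j => (∑ i, P i j) * a j, fun j => (∑ i, P i j) * b j,
    fun j => mul_nonneg (hs j) (ha j), fun j => mul_nonneg (hs j) (hb j), ?_, fun i j => ?_⟩
  · simp_rw [← sum_add_distrib, ← mul_add, hab, mul_one]
    exact sum_comm.trans hsum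
  · rw [← col_apply P, hPq j, ← hq j]
    simp only [Pi.smul_apply, Pi.add_apply, smul_eq_mul]
    ring

end Matrix

/-- a probability matrix of rank at most 2 is a mixture of two independence
models: P = α c₁r₁ᵗ + (1-α) c₂r₂ᵗ with α ∈ [0,1] and probability vectors c₁,c₂,r₁,r₂. -/
theorem mixture_of_two_independence {I J : ℕ} (P : Matrix (Fin I) (Fin J) ℝ)
    (hpos : ∀ i j, 0 ≤ P i j) (hsum : ∑ i, ∑ j, P i j = 1)
    (hrk : P.rank ≤ 2) :
    ∃ (α : ℝ) (c₁ c₂ : Fin I → ℝ) (r₁ r₂ : Fin J → ℝ),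
      0 ≤ α ∧ α ≤ 1 ∧
      (∀ i, 0 ≤ c₁ i) ∧ (∑ i, c₁ i = 1) ∧
      (∀ i, 0 ≤ c₂ i) ∧ (∑ i, c₂ i = 1) ∧
      (∀ j, 0 ≤ r₁ j) ∧ (∑ j, r₁ j = 1) ∧
      (∀ j, 0 ≤ r₂ j) ∧ (∑ j, r₂ j = 1) ∧
      ∀ i j, P i j = α * c₁ i * r₁ j + (1 - α) * c₂ i * r₂ j := by
  obtain ⟨c₁, hc₁, c₂, hc₂, A, B, hA, hB, hAB, hP⟩ :=
    P.exists_eq_mul_add_mul_of_rank_le_two hpos hsum hrk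
  obtain ⟨α, hα0, hα1, r₁, hr₁, r₂, hr₂, rfl, rfl⟩ := exists_mixture_of_sum_add_sum_eq_one hA hB hAB
  refine ⟨α, c₁, c₂, r₁, r₂, hα0, hα1, hc₁.1, hc₁.2, hc₂.1, hc₂.2, hr₁.1, hr₁.2, hr₂.1, hr₂.2,
    fun i j => ?_⟩
  rw [hP]
  simp only [Pi.smul_apply, smul_eq_mul]
  ring
end

section
/- Let P be an I×J probability matrix of rank 2 whose columns satisfy: column 1 is (x_1,…,x_I)^t, column 2 is (y_1,…,y_I)^t, and for each j ≥ 3 column j equals t_j·(x_1,…,x_I)^t + s_j·(y_1,…,y_I)^t with all coefficients x_i, y_i, t_j, s_j nonnegative, and with columns 1 and 2 both nonzero. Define a_i = x_i/(Σ x_i), c_i = y_i/(Σ y_i), b_j = t_j/(1+Σ t_j), d_j = s_j/(1+Σ s_j), and α = (1+Σ t_j)·(Σ x_i). Then the parameter point P' = (a_1,…,a_{I−1}, b_3,…,b_J, c_1,…,c_{I−1}, d_3,…,d_J, α) lies in U'_{1,2}, the identity α = 1 − (1+Σ s_j)·(Σ y_i) holds, and f_{1,2}(P') = P. -/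
/-- Column vector (a_1, …, a_{I-1}, 1 - Σ a_i) (here with I-1 = I free parameters,
living in ℝ^{I+1}). -/
def colVec {I : ℕ} (a : Fin I → ℝ) : Fin (I + 1) → ℝ :=
  Fin.snoc a (1 - ∑ i, a i)

/-- Row vector (1 - Σ b_i, 0, b_3, …, b_J) ∈ ℝ^{J+2}. -/
def rowVecB {J : ℕ} (b : Fin J → ℝ) : Fin (J + 2) → ℝ :=
  Fin.cons (1 - ∑ j, b j) (Fin.cons 0 b)

/-- Row vector (0, 1 - Σ d_i, d_3, …, d_J) ∈ ℝ^{J+2}. -/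
def rowVecD {J : ℕ} (d : Fin J → ℝ) : Fin (J + 2) → ℝ :=
  Fin.cons 0 (Fin.cons (1 - ∑ j, d j) d)

/-- The parametrization map f_{1,2}: sends the parameter point
(a, b, c, d, α) to the (I+1) × (J+2) matrix α·u·vᵗ + (1-α)·w·zᵗ. -/
def f12 {I J : ℕ} (a : Fin I → ℝ) (b : Fin J → ℝ) (c : Fin I → ℝ) (d : Fin J → ℝ)
    (α : ℝ) : Matrix (Fin (I + 1)) (Fin (J + 2)) ℝ :=
  fun i j => α * colVec a i * rowVecB b j + (1 - α) * colVec c i * rowVecD d j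

/-- The domain U'_{1,2}: all coordinates and all four coordinate sums lie in [0,1],
and α ∈ [0,1]. -/
def memU {I J : ℕ} (a : Fin I → ℝ) (b : Fin J → ℝ) (c : Fin I → ℝ) (d : Fin J → ℝ)
    (α : ℝ) : Prop :=
  (∀ i, 0 ≤ a i ∧ a i ≤ 1) ∧ (∀ j, 0 ≤ b j ∧ b j ≤ 1) ∧
  (∀ i, 0 ≤ c i ∧ c i ≤ 1) ∧ (∀ j, 0 ≤ d j ∧ d j ≤ 1) ∧
  (0 ≤ α ∧ α ≤ 1) ∧
  (0 ≤ ∑ i, a i ∧ ∑ i, a i ≤ 1) ∧ (0 ≤ ∑ j, b j ∧ ∑ j, b j ≤ 1) ∧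
  (0 ≤ ∑ i, c i ∧ ∑ i, c i ≤ 1) ∧ (0 ≤ ∑ j, d j ∧ ∑ j, d j ≤ 1)

/-!
Normalising the first two columns x and y of P to total mass one gives the column vectors of
the two rank-one summands, and dividing the coefficients t and s by 1 + Σ t and 1 + Σ s gives
the row vectors. Then α = (1 + Σ t) Σ x is the mass of P carried by the x-summand, and since P
sums to 1 the y-summand carries the rest, (1 + Σ s) Σ y = 1 - α.
-/

open Finset

lemma div_nonneg_and_le_one {K : Type*} [Field K] [LinearOrder K] [IsStrictOrderedRing K]
    {a b : K} (ha : 0 ≤ a) (hab : a ≤ b) : 0 ≤ a / b ∧ a / b ≤ 1 :=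
  ⟨div_nonneg ha (ha.trans hab), div_le_one_of_le₀ hab (ha.trans hab)⟩

lemma sum_castSucc_le_sum {M : Type*} [AddCommMonoid M] [PartialOrder M] [IsOrderedAddMonoid M]
    {I : ℕ} {x : Fin (I + 1) → M} (hx : ∀ i, 0 ≤ x i) :
    ∑ i : Fin I, x i.castSucc ≤ ∑ i, x i := by
  rw [Fin.sum_univ_castSucc x]
  exact le_add_of_nonneg_right (hx _)

lemma castSucc_div_sum_bounds {I : ℕ} {x : Fin (I + 1) → ℝ} (hx : ∀ i, 0 ≤ x i) :
    (∀ i : Fin I, 0 ≤ x i.castSucc / ∑ i, x i ∧ x i.castSucc / ∑ i, x i ≤ 1) ∧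
    (0 ≤ ∑ i : Fin I, x i.castSucc / ∑ i, x i ∧ ∑ i : Fin I, x i.castSucc / ∑ i, x i ≤ 1) := by
  refine ⟨fun i => div_nonneg_and_le_one (hx _) (single_le_sum (fun i _ => hx i) (mem_univ _)),
    ?_⟩
  rw [← sum_div]
  exact div_nonneg_and_le_one (sum_nonneg fun i _ => hx _) (sum_castSucc_le_sum hx)

lemma div_one_add_sum_bounds {J : ℕ} {t : Fin J → ℝ} (ht : ∀ j, 0 ≤ t j) :
    (∀ j, 0 ≤ t j / (1 + ∑ j, t j) ∧ t j / (1 + ∑ j, t j) ≤ 1) ∧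
    (0 ≤ ∑ j, t j / (1 + ∑ j, t j) ∧ ∑ j, t j / (1 + ∑ j, t j) ≤ 1) := by
  have hsum : 0 ≤ ∑ j, t j := sum_nonneg fun j _ => ht j
  refine ⟨fun j => div_nonneg_and_le_one (ht j) ?_, ?_⟩
  · linarith [single_le_sum (fun j _ => ht j) (mem_univ j)]
  · rw [← sum_div]
    exact div_nonneg_and_le_one hsum (by linarith)

lemma colVec_castSucc_div_sum {I : ℕ} (x : Fin (I + 1) → ℝ) (hx : ∑ i, x i ≠ 0) :
    colVec (fun i : Fin I => x i.castSucc / ∑ i, x i) = fun i => x i / ∑ i, x i := by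
  funext i
  refine Fin.lastCases ?_ (fun i => by simp [colVec]) i
  have hsplit := Fin.sum_univ_castSucc x
  simp only [colVec, Fin.snoc_last, ← sum_div]
  field_simp
  linarith

section Columns

variable {I J : ℕ} {P : Matrix (Fin (I + 1)) (Fin (J + 2)) ℝ} {x y : Fin (I + 1) → ℝ}
  {t s : Fin J → ℝ}

lemma sum_row_eq_of_columns (hcol1 : ∀ i, P i 0 = x i) (hcol2 : ∀ i, P i 1 = y i)
    (hcolj : ∀ i (j : Fin J), P i j.succ.succ = t j * x i + s j * y i) (i : Fin (I + 1)) :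
    ∑ j, P i j = (1 + ∑ j, t j) * x i + (1 + ∑ j, s j) * y i := by
  rw [Fin.sum_univ_succ, Fin.sum_univ_succ]
  simp only [Fin.succ_zero_eq_one, hcol1, hcol2, hcolj, sum_add_distrib, ← sum_mul]
  ring

lemma sum_eq_of_columns (hcol1 : ∀ i, P i 0 = x i) (hcol2 : ∀ i, P i 1 = y i)
    (hcolj : ∀ i (j : Fin J), P i j.succ.succ = t j * x i + s j * y i) :
    ∑ i, ∑ j, P i j = (1 + ∑ j, t j) * ∑ i, x i + (1 + ∑ j, s j) * ∑ i, y i := by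
  simp only [sum_row_eq_of_columns hcol1 hcol2 hcolj, sum_add_distrib, mul_sum]

lemma f12_eq_of_columns (hcol1 : ∀ i, P i 0 = x i) (hcol2 : ∀ i, P i 1 = y i)
    (hcolj : ∀ i (j : Fin J), P i j.succ.succ = t j * x i + s j * y i)
    (hx : ∑ i, x i ≠ 0) (hy : ∑ i, y i ≠ 0) (ht : 1 + ∑ j, t j ≠ 0) (hs : 1 + ∑ j, s j ≠ 0)
    (hα : 1 - (1 + ∑ j, t j) * ∑ i, x i = (1 + ∑ j, s j) * ∑ i, y i) :
    f12 (fun i : Fin I => x i.castSucc / ∑ i, x i)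
        (fun j => t j / (1 + ∑ j, t j))
        (fun i : Fin I => y i.castSucc / ∑ i, y i)
        (fun j => s j / (1 + ∑ j, s j))
        ((1 + ∑ j, t j) * ∑ i, x i) = P := by
  funext i j
  simp only [f12, colVec_castSucc_div_sum x hx, colVec_castSucc_div_sum y hy, hα]
  refine Fin.cases ?_ (fun j => Fin.cases ?_ (fun j => ?_) j) j
  · simp only [rowVecB, rowVecD, Fin.cons_zero, ← sum_div, hcol1, mul_zero, add_zero]
    field_simp
    ring
  · simp only [rowVecB, rowVecD, Fin.succ_zero_eq_one, Fin.cons_one, Fin.cons_zero, ← sum_div,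
      hcol2, mul_zero, zero_add]
    field_simp
    ring
  · simp only [rowVecB, rowVecD, Fin.cons_succ, hcolj]
    field_simp

end Columns

theorem f12_inverse_generic_general {I J : ℕ}
    (P : Matrix (Fin (I + 1)) (Fin (J + 2)) ℝ)
    (hsum : ∑ i, ∑ j, P i j = 1)
    (x y : Fin (I + 1) → ℝ) (t s : Fin J → ℝ)
    (hx : ∀ i, 0 ≤ x i) (hy : ∀ i, 0 ≤ y i)
    (ht : ∀ j, 0 ≤ t j) (hs : ∀ j, 0 ≤ s j)
    (hcol1 : ∀ i, P i 0 = x i) (hcol2 : ∀ i, P i 1 = y i)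
    (hcolj : ∀ i (j : Fin J), P i j.succ.succ = t j * x i + s j * y i)
    (hx0 : x ≠ 0) (hy0 : y ≠ 0) :
    memU (fun i : Fin I => x i.castSucc / ∑ i, x i)
         (fun j => t j / (1 + ∑ j, t j))
         (fun i : Fin I => y i.castSucc / ∑ i, y i)
         (fun j => s j / (1 + ∑ j, s j))
         ((1 + ∑ j, t j) * ∑ i, x i) ∧
    (1 + ∑ j, t j) * ∑ i, x i = 1 - (1 + ∑ j, s j) * ∑ i, y i ∧
    f12 (fun i : Fin I => x i.castSucc / ∑ i, x i)
        (fun j => t j / (1 + ∑ j, t j))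
        (fun i : Fin I => y i.castSucc / ∑ i, y i)
        (fun j => s j / (1 + ∑ j, s j))
        ((1 + ∑ j, t j) * ∑ i, x i) = P := by
  have hSx : 0 < ∑ i, x i := Fintype.sum_pos (lt_of_le_of_ne hx hx0.symm)
  have hSy : 0 < ∑ i, y i := Fintype.sum_pos (lt_of_le_of_ne hy hy0.symm)
  have hT : 0 < 1 + ∑ j, t j := by linarith [sum_nonneg fun j (_ : j ∈ univ) => ht j]
  have hS : 0 < 1 + ∑ j, s j := by linarith [sum_nonneg fun j (_ : j ∈ univ) => hs j]
  have hmass := (sum_eq_of_columns hcol1 hcol2 hcolj).symm.trans hsum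
  have hα : 0 ≤ (1 + ∑ j, t j) * ∑ i, x i ∧ (1 + ∑ j, t j) * ∑ i, x i ≤ 1 :=
    ⟨(mul_pos hT hSx).le, by linarith [mul_pos hS hSy]⟩
  obtain ⟨ha, ha_sum⟩ := castSucc_div_sum_bounds hx
  obtain ⟨hc, hc_sum⟩ := castSucc_div_sum_bounds hy
  obtain ⟨hb, hb_sum⟩ := div_one_add_sum_bounds ht
  obtain ⟨hd, hd_sum⟩ := div_one_add_sum_bounds hs
  exact ⟨⟨ha, hb, hc, hd, hα, ha_sum, hb_sum, hc_sum, hd_sum⟩, by linarith,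
    f12_eq_of_columns hcol1 hcol2 hcolj hSx.ne' hSy.ne' hT.ne' hS.ne' (by linarith)⟩

/-- Lemma "inverse", main case: for a rank-2 probability matrix P with
columns C₁ = x, C₂ = y and C_{j+2} = t_j x + s_j y (all coefficients nonnegative, first
two columns nonzero), the parameter point P' built from
a_i = x_i/Σx, c_i = y_i/Σy, b_j = t_j/(1+Σt), d_j = s_j/(1+Σs), α = (1+Σt)·Σx
lies in U'_{1,2}, satisfies α = 1 − (1+Σs)·Σy, and f_{1,2}(P') = P. -/
theorem f12_inverse_generic {I J : ℕ} (hIJ : I + 1 ≤ J + 2)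
    (P : Matrix (Fin (I + 1)) (Fin (J + 2)) ℝ)
    (hpos : ∀ i j, 0 ≤ P i j) (hsum : ∑ i, ∑ j, P i j = 1) (hrk : P.rank = 2)
    (x y : Fin (I + 1) → ℝ) (t s : Fin J → ℝ)
    (hx : ∀ i, 0 ≤ x i) (hy : ∀ i, 0 ≤ y i)
    (ht : ∀ j, 0 ≤ t j) (hs : ∀ j, 0 ≤ s j)
    (hcol1 : ∀ i, P i 0 = x i) (hcol2 : ∀ i, P i 1 = y i)
    (hcolj : ∀ i (j : Fin J), P i j.succ.succ = t j * x i + s j * y i)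
    (hx0 : x ≠ 0) (hy0 : y ≠ 0) :
    memU (fun i : Fin I => x i.castSucc / ∑ i, x i)
         (fun j => t j / (1 + ∑ j, t j))
         (fun i : Fin I => y i.castSucc / ∑ i, y i)
         (fun j => s j / (1 + ∑ j, s j))
         ((1 + ∑ j, t j) * ∑ i, x i) ∧
    (1 + ∑ j, t j) * ∑ i, x i = 1 - (1 + ∑ j, s j) * ∑ i, y i ∧
    f12 (fun i : Fin I => x i.castSucc / ∑ i, x i)
        (fun j => t j / (1 + ∑ j, t j))
        (fun i : Fin I => y i.castSucc / ∑ i, y i)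
        (fun j => s j / (1 + ∑ j, s j))
        ((1 + ∑ j, t j) * ∑ i, x i) = P :=
  f12_inverse_generic_general P hsum x y t s hx hy ht hs hcol1 hcol2 hcolj hx0 hy0
end

section
/- Let P' = (a_1,…,a_{I−1}, b_3,…,b_J, c_1,…,c_{I−1}, d_3,…,d_J, α) ∈ U'_{1,2} and P = f_{1,2}(P'). If some coefficient b_j equals zero or some coefficient d_j equals zero, then P has at least two proportional columns, i.e. there exist two distinct column indices j ≠ j' and a scalar λ such that column j of P equals λ times column j' of P (or column j' is zero). -/
/-!
If `b_j = 0`, the row vector `v` vanishes in columns `2` and `j`, so in both of these columns only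
the rank-one term `(1 - α) w zᵗ` survives: they are multiples of the same vector `w`, hence
proportional. Symmetrically, if `d_j = 0` then `z` vanishes in columns `1` and `j`, which are both
multiples of `u`.
-/

theorem Matrix.exists_col_eq_smul_or_col_eq_zero_of_cols_mul {m n K : Type*} [Field K]
    (M : Matrix m n K) (w : m → K) {j j' : n} {x y : K}
    (hj : ∀ i, M i j = w i * x) (hj' : ∀ i, M i j' = w i * y) :
    ∃ lam : K, (∀ i, M i j = lam * M i j') ∨ (∀ i, M i j' = 0) := by
  by_cases hy : y = 0
  · exact ⟨0, Or.inr fun i => by rw [hj', hy, mul_zero]⟩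
  · refine ⟨x / y, Or.inl fun i => ?_⟩
    rw [hj, hj']
    field_simp

section f12

variable {I J : ℕ}

@[simp]
theorem rowVecB_one (b : Fin J → ℝ) : rowVecB b 1 = 0 := rfl

@[simp]
theorem rowVecB_succ_succ (b : Fin J → ℝ) (j : Fin J) : rowVecB b j.succ.succ = b j := rfl

@[simp]
theorem rowVecD_zero (d : Fin J → ℝ) : rowVecD d 0 = 0 := rfl

@[simp]
theorem rowVecD_succ_succ (d : Fin J → ℝ) (j : Fin J) : rowVecD d j.succ.succ = d j := rfl

theorem f12_apply_of_rowVecB_eq_zero (a : Fin I → ℝ) (b : Fin J → ℝ) (c : Fin I → ℝ)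
    (d : Fin J → ℝ) (α : ℝ) {k : Fin (J + 2)} (hk : rowVecB b k = 0) (i : Fin (I + 1)) :
    f12 a b c d α i k = colVec c i * ((1 - α) * rowVecD d k) := by
  simp only [f12, hk]
  ring

theorem f12_apply_of_rowVecD_eq_zero (a : Fin I → ℝ) (b : Fin J → ℝ) (c : Fin I → ℝ)
    (d : Fin J → ℝ) (α : ℝ) {k : Fin (J + 2)} (hk : rowVecD d k = 0) (i : Fin (I + 1)) :
    f12 a b c d α i k = colVec a i * (α * rowVecB b k) := by
  simp only [f12, hk]
  ring

end f12

theorem f12_proportional_columns_general {I J : ℕ}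
    (a : Fin I → ℝ) (b : Fin J → ℝ) (c : Fin I → ℝ) (d : Fin J → ℝ) (α : ℝ)
    (hzero : (∃ j, b j = 0) ∨ (∃ j, d j = 0)) :
    ∃ j j' : Fin (J + 2), j ≠ j' ∧ ∃ lam : ℝ,
      (∀ i, f12 a b c d α i j = lam * f12 a b c d α i j') ∨
      (∀ i, f12 a b c d α i j' = 0) := by
  rcases hzero with ⟨j, hb⟩ | ⟨j, hd⟩
  · refine ⟨1, j.succ.succ, (Fin.succ_succ_ne_one j).symm, ?_⟩
    exact (f12 a b c d α).exists_col_eq_smul_or_col_eq_zero_of_cols_mul (colVec c)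
      (f12_apply_of_rowVecB_eq_zero a b c d α (rowVecB_one b))
      (f12_apply_of_rowVecB_eq_zero a b c d α (by rw [rowVecB_succ_succ, hb]))
  · refine ⟨0, j.succ.succ, (Fin.succ_ne_zero _).symm, ?_⟩
    exact (f12 a b c d α).exists_col_eq_smul_or_col_eq_zero_of_cols_mul (colVec a)
      (f12_apply_of_rowVecD_eq_zero a b c d α (rowVecD_zero d))
      (f12_apply_of_rowVecD_eq_zero a b c d α (by rw [rowVecD_succ_succ, hd]))

/-- if P' ∈ U'_{1,2} and some b_j = 0 or some d_j = 0, then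
P = f_{1,2}(P') has two proportional columns: there are distinct columns j ≠ j' and a
scalar λ with column j equal to λ times column j' (or column j' zero). -/
theorem f12_proportional_columns {I J : ℕ} (hIJ : I + 1 ≤ J + 2)
    (a : Fin I → ℝ) (b : Fin J → ℝ) (c : Fin I → ℝ) (d : Fin J → ℝ) (α : ℝ)
    (hU : memU a b c d α)
    (hzero : (∃ j, b j = 0) ∨ (∃ j, d j = 0)) :
    ∃ j j' : Fin (J + 2), j ≠ j' ∧ ∃ lam : ℝ,
      (∀ i, f12 a b c d α i j = lam * f12 a b c d α i j') ∨
      (∀ i, f12 a b c d α i j' = 0) :=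
  f12_proportional_columns_general a b c d α hzero
end

section
/- Let P be an I×J probability matrix. If P has rank 2, then P is in particular not the zero matrix and there exist two linearly independent columns of P; moreover, for any two linearly independent columns C_{j_1}, C_{j_2} of P, every column of P is a real linear combination of C_{j_1} and C_{j_2}, and the conclusion of the nonnegativity lemma holds for a suitable choice of two columns: there exist columns C̄, C̃ of P (possibly different from C_{j_1}, C_{j_2}) such that every column of P is a nonnegative linear combination of C̄ and C̃. -/
/-!
The columns of `P` span a plane, so any two independent columns span all of them. For the cone
part, scale every nonzero column to total mass one: the rescaled columns lie on the line through
the two rescaled independent columns, hence on the segment between the two extreme ones, and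
scaling back writes every column as a nonnegative combination of those two extreme columns.
-/

open Module Submodule
open scoped Matrix

section Span

variable {K M ι : Type*} [Field K] [AddCommGroup M] [Module K M]

theorem exists_linearIndependent_pair_of_one_lt_finrank_span {v : ι → M}
    (h : 1 < finrank K (span K (Set.range v))) :
    ∃ i j, LinearIndependent K ![v i, v j] := by
  by_contra! hdep
  obtain ⟨i₀, hi₀⟩ : ∃ i₀, v i₀ ≠ 0 := by
    by_contra! hzero
    have : span K (Set.range v) = ⊥ := by
      rw [span_eq_bot]
      rintro - ⟨i, rfl⟩
      exact hzero i
    rw [this, finrank_bot] at h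
    omega
  have hle : span K (Set.range v) ≤ K ∙ v i₀ := by
    rw [span_le]
    rintro - ⟨j, rfl⟩
    have hdep := hdep j i₀
    simp only [linearIndependent_fin2, Matrix.cons_val_one, Matrix.cons_val_zero] at hdep
    push Not at hdep
    exact mem_span_singleton.mpr (hdep hi₀)
  have := (finrank_mono hle).trans (finrank_span_singleton hi₀).le
  omega

theorem span_pair_eq_span_range_of_finrank_eq_two {v : ι → M}
    (h : finrank K (span K (Set.range v)) = 2) {i j : ι}
    (hij : LinearIndependent K ![v i, v j]) :
    span K {v i, v j} = span K (Set.range v) := by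
  have : FiniteDimensional K (span K (Set.range v)) := Module.finite_of_finrank_eq_succ h
  refine eq_of_le_of_finrank_eq (span_mono ?_) ?_
  · rintro - (rfl | rfl) <;> exact ⟨_, rfl⟩
  · rw [h, ← Matrix.range_cons_cons_empty _ _ ![], finrank_span_eq_card hij, Fintype.card_fin]

theorem inv_smul_mem_affineSpan_pair_of_mem_span_pair (g : M →ₗ[K] K) {x y z : M}
    (hx : g x ≠ 0) (hy : g y ≠ 0) (hz : g z ≠ 0) (hmem : z ∈ span K {x, y}) :
    (g z)⁻¹ • z ∈ line[K, (g x)⁻¹ • x, (g y)⁻¹ • y] := by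
  obtain ⟨a, b, rfl⟩ := mem_span_pair.mp hmem
  have hgz : g (a • x + b • y) = a * g x + b * g y := by simp
  rw [mem_affineSpan_pair_iff_exists_lineMap_eq]
  refine ⟨b * g y / g (a • x + b • y), ?_⟩
  rw [AffineMap.lineMap_apply_module, hgz, smul_add, smul_smul, smul_smul, smul_smul, smul_smul]
  rw [hgz] at hz
  congr 2
  · field_simp
    ring
  · field_simp

end Span

section Cone

variable {𝕜 E ι : Type*} [Field 𝕜] [LinearOrder 𝕜] [IsStrictOrderedRing 𝕜]
  [AddCommGroup E] [Module 𝕜 E]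

theorem Finset.exists_forall_mem_segment_of_mem_affineSpan_pair {S : Finset ι} (hS : S.Nonempty)
    {u : ι → E} {p q : E} (hu : ∀ j ∈ S, u j ∈ line[𝕜, p, q]) :
    ∃ jmin ∈ S, ∃ jmax ∈ S, ∀ j ∈ S, u j ∈ segment 𝕜 (u jmin) (u jmax) := by
  simp only [mem_affineSpan_pair_iff_exists_lineMap_eq] at hu
  choose! r hr using hu
  obtain ⟨jmin, hjmin, hmin⟩ := S.exists_min_image r hS
  obtain ⟨jmax, hjmax, hmax⟩ := S.exists_max_image r hS
  refine ⟨jmin, hjmin, jmax, hjmax, fun j hj => ?_⟩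
  rw [← hr j hj, ← hr jmin hjmin, ← hr jmax hjmax, ← image_segment,
    segment_eq_Icc ((hmin j hj).trans (hmax j hj))]
  exact ⟨r j, ⟨hmin j hj, hmax j hj⟩, rfl⟩

theorem exists_nonneg_smul_add_of_inv_smul_mem_segment {a b z : E} {α β γ : 𝕜}
    (hα : 0 ≤ α) (hβ : 0 ≤ β) (hγ : 0 < γ) (h : γ⁻¹ • z ∈ segment 𝕜 (α⁻¹ • a) (β⁻¹ • b)) :
    ∃ t s : 𝕜, 0 ≤ t ∧ 0 ≤ s ∧ z = t • a + s • b := by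
  obtain ⟨μ, ν, hμ, hν, -, h⟩ := h
  refine ⟨γ * μ * α⁻¹, γ * ν * β⁻¹, by positivity, by positivity, ?_⟩
  rw [← smul_inv_smul₀ hγ.ne' z, ← h, smul_add, smul_smul, smul_smul, smul_smul, smul_smul,
    mul_assoc, mul_assoc]

theorem exists_forall_exists_nonneg_smul_add_of_mem_span_pair [Fintype ι] (g : E →ₗ[𝕜] 𝕜)
    {c : ι → E} {i₁ i₂ : ι} (hg : ∀ j, 0 ≤ g (c j)) (hg0 : ∀ j, g (c j) = 0 → c j = 0)
    (h₁ : g (c i₁) ≠ 0) (h₂ : g (c i₂) ≠ 0) (hc : ∀ j, c j ∈ span 𝕜 {c i₁, c i₂}) :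
    ∃ jmin jmax, ∀ j, ∃ t s : 𝕜, 0 ≤ t ∧ 0 ≤ s ∧ c j = t • c jmin + s • c jmax := by
  classical
  set S := Finset.univ.filter fun j => g (c j) ≠ 0
  obtain ⟨jmin, -, jmax, -, hseg⟩ := S.exists_forall_mem_segment_of_mem_affineSpan_pair
    (u := fun j => (g (c j))⁻¹ • c j) ⟨i₁, by simpa [S]⟩
    fun j hj => inv_smul_mem_affineSpan_pair_of_mem_span_pair g h₁ h₂ (by simpa [S] using hj) (hc j)
  refine ⟨jmin, jmax, fun j => ?_⟩
  by_cases hj : g (c j) = 0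
  · exact ⟨0, 0, le_rfl, le_rfl, by simp [hg0 j hj]⟩
  · exact exists_nonneg_smul_add_of_inv_smul_mem_segment (hg _) (hg _) ((hg j).lt_of_ne' hj)
      (hseg j (by simpa [S]))

end Cone

theorem rank_two_prob_matrix_columns_general {I J : ℕ} (P : Matrix (Fin I) (Fin J) ℝ)
    (hpos : ∀ i j, 0 ≤ P i j) (hrk : P.rank = 2) :
    P ≠ 0 ∧
    (∃ j₁ j₂ : Fin J, LinearIndependent ℝ ![fun i => P i j₁, fun i => P i j₂]) ∧
    (∀ j₁ j₂ : Fin J, LinearIndependent ℝ ![fun i => P i j₁, fun i => P i j₂] →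
      ∀ j : Fin J, ∃ t s : ℝ, ∀ i, P i j = t * P i j₁ + s * P i j₂) ∧
    (∃ jbar jtilde : Fin J, ∀ j : Fin J, ∃ t s : ℝ, 0 ≤ t ∧ 0 ≤ s ∧
      ∀ i, P i j = t * P i jbar + s * P i jtilde) := by
  have hcols : finrank ℝ (span ℝ (Set.range Pᵀ)) = 2 := P.rank_eq_finrank_span_cols ▸ hrk
  have hspan (j₁ j₂ : Fin J) (h : LinearIndependent ℝ ![Pᵀ j₁, Pᵀ j₂]) (j : Fin J) :
      Pᵀ j ∈ span ℝ {Pᵀ j₁, Pᵀ j₂} :=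
    span_pair_eq_span_range_of_finrank_eq_two hcols h ▸ subset_span ⟨j, rfl⟩
  obtain ⟨j₁, j₂, hli⟩ := exists_linearIndependent_pair_of_one_lt_finrank_span (hcols ▸ one_lt_two)
  refine ⟨fun h => by simp [h] at hrk, ⟨j₁, j₂, hli⟩, fun j₁ j₂ h j => ?_, ?_⟩
  · obtain ⟨t, s, hts⟩ := mem_span_pair.mp (hspan j₁ j₂ h j)
    exact ⟨t, s, fun i => by simpa using (congrFun hts i).symm⟩
  · let g : (Fin I → ℝ) →ₗ[ℝ] ℝ := ∑ i, LinearMap.proj i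
    have hg (j : Fin J) : g (Pᵀ j) = ∑ i, P i j := by simp [g]
    have hg0 (j : Fin J) (h : g (Pᵀ j) = 0) : Pᵀ j = 0 := by
      rw [hg, Finset.sum_eq_zero_iff_of_nonneg fun i _ => hpos i j] at h
      ext i
      exact h i (Finset.mem_univ i)
    obtain ⟨jbar, jtilde, hcone⟩ := exists_forall_exists_nonneg_smul_add_of_mem_span_pair g
      (fun j => hg j ▸ Finset.sum_nonneg fun i _ => hpos i j) hg0
      (mt (hg0 j₁) (hli.ne_zero 0)) (mt (hg0 j₂) (hli.ne_zero 1)) (hspan j₁ j₂ hli)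
    refine ⟨jbar, jtilde, fun j => ?_⟩
    obtain ⟨t, s, ht, hs, hj⟩ := hcone j
    exact ⟨t, s, ht, hs, fun i => by simpa using congrFun hj i⟩

/-- a probability matrix of rank 2 is nonzero, has two linearly
independent columns, any two linearly independent columns span all columns over ℝ, and
there exist two columns of which every column is a *nonnegative* linear combination. -/
theorem rank_two_prob_matrix_columns {I J : ℕ} (P : Matrix (Fin I) (Fin J) ℝ)
    (hpos : ∀ i j, 0 ≤ P i j) (hsum : ∑ i, ∑ j, P i j = 1)
    (hrk : P.rank = 2) :
    P ≠ 0 ∧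
    (∃ j₁ j₂ : Fin J, LinearIndependent ℝ ![fun i => P i j₁, fun i => P i j₂]) ∧
    (∀ j₁ j₂ : Fin J, LinearIndependent ℝ ![fun i => P i j₁, fun i => P i j₂] →
      ∀ j : Fin J, ∃ t s : ℝ, ∀ i, P i j = t * P i j₁ + s * P i j₂) ∧
    (∃ jbar jtilde : Fin J, ∀ j : Fin J, ∃ t s : ℝ, 0 ≤ t ∧ 0 ≤ s ∧
      ∀ i, P i j = t * P i jbar + s * P i jtilde) :=
  rank_two_prob_matrix_columns_general P hpos hrk
end

section
/- Let P be an I×J probability matrix whose first two columns are linearly independent (so in particular rank(P) = 2 if P has rank at most 2, and every column of P is a linear combination of the first two). Suppose moreover that every column of P is a nonnegative linear combination of the first two columns. Then P lies in the image of the map f_{1,2}: there exists a parameter point P' ∈ U'_{1,2} with f_{1,2}(P') = P. -/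
/-!
Write p₀, p₁ for the first two columns of `P`, so that `P = p₀ tᵀ + p₁ sᵀ` with `t, s ≥ 0`.
Reading this identity on columns 0 and 1, linear independence forces `(t₀, s₀) = (1, 0)` and
`(t₁, s₁) = (0, 1)`. Normalizing both rank-one terms to products of probability vectors gives
`P = α u vᵀ + (1 - α) w zᵀ` with `α = (Σ p₀)(Σ t)`, and `v₁ = 0`, `z₀ = 0` are exactly the zero
patterns of the row vectors of `f12`, whose free parameters are then `Fin.init u`,
`Fin.tail (Fin.tail v)`, `Fin.init w` and `Fin.tail (Fin.tail z)`.
-/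

open Finset Matrix Function

lemma colVec_init {I : ℕ} {u : Fin (I + 1) → ℝ} (hu : ∑ i, u i = 1) :
    colVec (Fin.init u) = u := by
  rw [Fin.sum_univ_castSucc] at hu
  rw [colVec, show 1 - ∑ i, Fin.init u i = u (Fin.last I) by simp only [Fin.init]; linarith]
  exact Fin.snoc_init_self u

lemma rowVecB_tail_tail {J : ℕ} {v : Fin (J + 2) → ℝ} (hv : ∑ j, v j = 1) (hv1 : v 1 = 0) :
    rowVecB (Fin.tail (Fin.tail v)) = v := by
  rw [Fin.sum_univ_succ, Fin.sum_univ_succ, Fin.succ_zero_eq_one, hv1] at hv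
  rw [rowVecB, show 1 - ∑ j, Fin.tail (Fin.tail v) j = v 0 by simp only [Fin.tail]; linarith]
  conv_rhs => rw [← Fin.cons_self_tail v, ← Fin.cons_self_tail (Fin.tail v)]
  congr 2
  exact hv1.symm

lemma rowVecD_tail_tail {J : ℕ} {z : Fin (J + 2) → ℝ} (hz : ∑ j, z j = 1) (hz0 : z 0 = 0) :
    rowVecD (Fin.tail (Fin.tail z)) = z := by
  rw [Fin.sum_univ_succ, Fin.sum_univ_succ, Fin.succ_zero_eq_one, hz0] at hz
  rw [rowVecD, show 1 - ∑ j, Fin.tail (Fin.tail z) j = z 1 by simp only [Fin.tail]; linarith]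
  conv_rhs => rw [← Fin.cons_self_tail z, ← Fin.cons_self_tail (Fin.tail z)]
  rw [hz0]
  rfl

lemma sum_comp_mem_Icc_of_mem_stdSimplex {ι κ : Type*} [Fintype ι] [Fintype κ] {x : ι → ℝ}
    (hx : x ∈ stdSimplex ℝ ι) {e : κ → ι} (he : Injective e) :
    ∑ k, x (e k) ∈ Set.Icc 0 1 := by
  rw [show ∑ k, x (e k) = ∑ i ∈ univ.map ⟨e, he⟩, x i from (sum_map univ ⟨e, he⟩ x).symm]
  exact ⟨sum_nonneg fun i _ => hx.1 i, hx.2 ▸ sum_le_univ_sum_of_nonneg hx.1⟩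

lemma memU_of_mem_stdSimplex {I J : ℕ} {u w : Fin (I + 1) → ℝ} {v z : Fin (J + 2) → ℝ}
    (hu : u ∈ stdSimplex ℝ _) (hv : v ∈ stdSimplex ℝ _) (hw : w ∈ stdSimplex ℝ _)
    (hz : z ∈ stdSimplex ℝ _) {α : ℝ} (hα : α ∈ Set.Icc 0 1) :
    memU (Fin.init u) (Fin.tail (Fin.tail v)) (Fin.init w) (Fin.tail (Fin.tail z)) α := by
  have hcast : Injective (Fin.castSucc : Fin I → Fin (I + 1)) := Fin.castSucc_injective I
  have hsucc : Injective (fun j : Fin J => j.succ.succ) :=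
    (Fin.succ_injective _).comp (Fin.succ_injective _)
  exact ⟨fun i => mem_Icc_of_mem_stdSimplex hu _, fun j => mem_Icc_of_mem_stdSimplex hv _,
    fun i => mem_Icc_of_mem_stdSimplex hw _, fun j => mem_Icc_of_mem_stdSimplex hz _, hα,
    sum_comp_mem_Icc_of_mem_stdSimplex hu hcast, sum_comp_mem_Icc_of_mem_stdSimplex hv hsucc,
    sum_comp_mem_Icc_of_mem_stdSimplex hw hcast, sum_comp_mem_Icc_of_mem_stdSimplex hz hsucc⟩

lemma f12_init_tail_tail {I J : ℕ} {u w : Fin (I + 1) → ℝ} {v z : Fin (J + 2) → ℝ}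
    (hu : ∑ i, u i = 1) (hv : ∑ j, v j = 1) (hv1 : v 1 = 0) (hw : ∑ i, w i = 1)
    (hz : ∑ j, z j = 1) (hz0 : z 0 = 0) (α : ℝ) :
    f12 (Fin.init u) (Fin.tail (Fin.tail v)) (Fin.init w) (Fin.tail (Fin.tail z)) α =
      α • vecMulVec u v + (1 - α) • vecMulVec w z := by
  ext i j
  simp only [f12, colVec_init hu, colVec_init hw, rowVecB_tail_tail hv hv1,
    rowVecD_tail_tail hz hz0, Matrix.add_apply, Matrix.smul_apply, vecMulVec_apply, smul_eq_mul,
    mul_assoc]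

lemma div_sum_mem_stdSimplex {ι : Type*} [Fintype ι] {x : ι → ℝ} (hx : 0 ≤ x)
    (hpos : 0 < ∑ i, x i) : (fun i => x i / ∑ j, x j) ∈ stdSimplex ℝ ι :=
  ⟨fun i => div_nonneg (hx i) hpos.le, by rw [← sum_div, div_self hpos.ne']⟩

lemma vecMulVec_eq_smul_div_sum {m n : Type*} [Fintype m] [Fintype n] {x : m → ℝ} {y : n → ℝ}
    (hx : ∑ i, x i ≠ 0) (hy : ∑ j, y j ≠ 0) :
    vecMulVec x y =
      ((∑ i, x i) * ∑ j, y j) • vecMulVec (fun i => x i / ∑ k, x k) (fun j => y j / ∑ k, y k) := by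
  ext i j
  simp only [Matrix.smul_apply, vecMulVec_apply, smul_eq_mul]
  field_simp

lemma sum_sum_vecMulVec {m n : Type*} [Fintype m] [Fintype n] (x : m → ℝ) (y : n → ℝ) :
    ∑ i, ∑ j, vecMulVec x y i j = (∑ i, x i) * ∑ j, y j :=
  (Fintype.sum_mul_sum x y).symm

lemma exists_memU_f12_eq_add_vecMulVec {I J : ℕ} {x x' : Fin (I + 1) → ℝ}
    {y y' : Fin (J + 2) → ℝ} (hx : 0 < x) (hy : 0 < y) (hx' : 0 < x') (hy' : 0 < y')
    (hy1 : y 1 = 0) (hy'0 : y' 0 = 0)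
    (htotal : (∑ i, x i) * (∑ j, y j) + (∑ i, x' i) * (∑ j, y' j) = 1) :
    ∃ a b c d α, memU a b c d α ∧ f12 a b c d α = vecMulVec x y + vecMulVec x' y' := by
  have hu := div_sum_mem_stdSimplex hx.le (Fintype.sum_pos hx)
  have hv := div_sum_mem_stdSimplex hy.le (Fintype.sum_pos hy)
  have hw := div_sum_mem_stdSimplex hx'.le (Fintype.sum_pos hx')
  have hz := div_sum_mem_stdSimplex hy'.le (Fintype.sum_pos hy')
  have hα : (∑ i, x i) * (∑ j, y j) ∈ Set.Icc 0 1 :=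
    ⟨(mul_pos (Fintype.sum_pos hx) (Fintype.sum_pos hy)).le,
      by linarith [mul_pos (Fintype.sum_pos hx') (Fintype.sum_pos hy')]⟩
  refine ⟨_, _, _, _, _, memU_of_mem_stdSimplex hu hv hw hz hα, ?_⟩
  rw [f12_init_tail_tail hu.2 hv.2 (by simp [hy1]) hw.2 hz.2 (by simp [hy'0]),
    vecMulVec_eq_smul_div_sum (Fintype.sum_pos hx).ne' (Fintype.sum_pos hy).ne',
    vecMulVec_eq_smul_div_sum (Fintype.sum_pos hx').ne' (Fintype.sum_pos hy').ne', ← htotal,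
    add_sub_cancel_left]

theorem mem_image_f12_general {I J : ℕ}
    (P : Matrix (Fin (I + 1)) (Fin (J + 2)) ℝ)
    (hpos : ∀ i j, 0 ≤ P i j) (hsum : ∑ i, ∑ j, P i j = 1)
    (hli : LinearIndependent ℝ ![fun i => P i 0, fun i => P i 1])
    (hcomb : ∀ j : Fin (J + 2), ∃ t s : ℝ, 0 ≤ t ∧ 0 ≤ s ∧
      ∀ i, P i j = t * P i 0 + s * P i 1) :
    ∃ (a : Fin I → ℝ) (b : Fin J → ℝ) (c : Fin I → ℝ) (d : Fin J → ℝ) (α : ℝ),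
      memU a b c d α ∧ f12 a b c d α = P := by
  choose t s ht hs hP using hcomb
  set p₀ : Fin (I + 1) → ℝ := fun i => P i 0
  set p₁ : Fin (I + 1) → ℝ := fun i => P i 1
  have hP_eq : P = vecMulVec p₀ t + vecMulVec p₁ s := by
    ext i j
    rw [Matrix.add_apply, vecMulVec_apply, vecMulVec_apply, hP j i]
    ring
  have hcol (j) : t j • p₀ + s j • p₁ = fun i => P i j := funext fun i => (hP j i).symm
  obtain ⟨ht0, hs0⟩ : t 0 = 1 ∧ s 0 = 0 :=
    hli.eq_of_pair (by rw [hcol 0, one_smul, zero_smul, add_zero])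
  obtain ⟨ht1, hs1⟩ : t 1 = 0 ∧ s 1 = 1 :=
    hli.eq_of_pair (by rw [hcol 1, one_smul, zero_smul, zero_add])
  rw [hP_eq] at hsum
  simp only [Matrix.add_apply, sum_add_distrib, sum_sum_vecMulVec] at hsum
  have hp₀ : 0 < p₀ := (Pi.le_def.2 fun i => hpos i 0).lt_of_ne' (hli.ne_zero 0)
  have hp₁ : 0 < p₁ := (Pi.le_def.2 fun i => hpos i 1).lt_of_ne' (hli.ne_zero 1)
  have ht_pos : 0 < t := Pi.lt_def.2 ⟨ht, 0, ht0 ▸ one_pos⟩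
  have hs_pos : 0 < s := Pi.lt_def.2 ⟨hs, 1, hs1 ▸ one_pos⟩
  rw [hP_eq]
  exact exists_memU_f12_eq_add_vecMulVec hp₀ ht_pos hp₁ hs_pos ht1 hs0 hsum

/-- a probability matrix whose first two columns are linearly independent
and such that every column is a nonnegative linear combination of the first two columns
lies in the image of f_{1,2}. -/
theorem mem_image_f12 {I J : ℕ} (hIJ : I + 1 ≤ J + 2)
    (P : Matrix (Fin (I + 1)) (Fin (J + 2)) ℝ)
    (hpos : ∀ i j, 0 ≤ P i j) (hsum : ∑ i, ∑ j, P i j = 1)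
    (hli : LinearIndependent ℝ ![fun i => P i 0, fun i => P i 1])
    (hcomb : ∀ j : Fin (J + 2), ∃ t s : ℝ, 0 ≤ t ∧ 0 ≤ s ∧
      ∀ i, P i j = t * P i 0 + s * P i 1) :
    ∃ (a : Fin I → ℝ) (b : Fin J → ℝ) (c : Fin I → ℝ) (d : Fin J → ℝ) (α : ℝ),
      memU a b c d α ∧ f12 a b c d α = P :=
  mem_image_f12_general P hpos hsum hli hcomb
end
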